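/- Let (M,g) be a Riemannian manifold and fix local coordinates near x ∈ M. With X(v) := exp_x^{-1}(x - v) expanded in homogeneous terms X(v) = Σ_k X^{(k)}(v), one has X^{(1)}(v) = v, X^{(2)}(v) = -(1/2)Γ(v,v), and X^{(3)}(v) = -(1/6) dΓ(v,v,v) + (1/6) Γ(v, Γ(v,v)). -/
import Mathlib

open Filter Topology

private lemma step_aux {E : Type*} [NormedAddCommGroup E] [NormedSpace ℝ E]
    (f g : ℝ → E) (k : E) (m : ℕ) (hg : Continuous g)
    (hfg : ∀ t ∈ Set.Ioi (0:ℝ), t ^ m • f t = k + t • g t)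
    (h : Tendsto f (nhdsWithin 0 (Set.Ioi 0)) (nhds 0)) : k = 0 := by
  have h1 : Tendsto (fun t : ℝ => t ^ m • f t) (nhdsWithin 0 (Set.Ioi 0)) (nhds (0:E)) := by
    have hp : Tendsto (fun t : ℝ => t ^ m) (nhdsWithin (0:ℝ) (Set.Ioi 0)) (nhds ((0:ℝ) ^ m)) :=
      ((continuous_pow m).tendsto 0).mono_left nhdsWithin_le_nhds
    simpa using hp.smul h
  have h2 : Tendsto (fun t : ℝ => k + t • g t) (nhdsWithin (0:ℝ) (Set.Ioi 0)) (nhds k) := by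
    have hc : Continuous (fun t : ℝ => k + t • g t) := by fun_prop
    simpa using (hc.tendsto 0).mono_left nhdsWithin_le_nhds
  have h3 : Tendsto (fun t : ℝ => k + t • g t) (nhdsWithin (0:ℝ) (Set.Ioi 0)) (nhds (0:E)) := by
    refine h1.congr' ?_
    filter_upwards [self_mem_nhdsWithin] with t ht using hfg t ht
  exact (tendsto_nhds_unique h3 h2).symm

private lemma extract3 {E : Type*} [NormedAddCommGroup E] [NormedSpace ℝ E]
    (k1 k2 k3 k4 k5 k6 k7 k8 k9 : E)
    (h : Tendsto (fun t : ℝ => (t ^ 3)⁻¹ •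
        (t • k1 + t ^ 2 • k2 + t ^ 3 • k3 + t ^ 4 • k4 + t ^ 5 • k5 + t ^ 6 • k6 +
          t ^ 7 • k7 + t ^ 8 • k8 + t ^ 9 • k9))
      (nhdsWithin 0 (Set.Ioi 0)) (nhds 0)) :
    k1 = 0 ∧ k2 = 0 ∧ k3 = 0 := by
  have e1 : k1 = 0 := by
    refine step_aux _ (fun t : ℝ => k2 + t • k3 + t ^ 2 • k4 + t ^ 3 • k5 + t ^ 4 • k6 +
      t ^ 5 • k7 + t ^ 6 • k8 + t ^ 7 • k9) k1 2 (by fun_prop) ?_ h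
    intro t ht
    have ht0 : t ≠ 0 := ne_of_gt ht
    match_scalars <;> field_simp <;> ring
  have e2 : k2 = 0 := by
    refine step_aux _ (fun t : ℝ => k3 + t • k4 + t ^ 2 • k5 + t ^ 3 • k6 +
      t ^ 4 • k7 + t ^ 5 • k8 + t ^ 6 • k9) k2 1 (by fun_prop) ?_ h
    intro t ht
    have ht0 : t ≠ 0 := ne_of_gt ht
    rw [e1]
    match_scalars <;> field_simp <;> ring
  have e3 : k3 = 0 := by
    refine step_aux _ (fun t : ℝ => k4 + t • k5 + t ^ 2 • k6 + t ^ 3 • k7 +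
      t ^ 4 • k8 + t ^ 5 • k9) k3 0 (by fun_prop) ?_ h
    intro t ht
    have ht0 : t ≠ 0 := ne_of_gt ht
    rw [e1, e2]
    match_scalars <;> field_simp <;> ring
  exact ⟨e1, e2, e3⟩

set_option maxHeartbeats 2000000 in
/-- With `X(v) = exp_x⁻¹(x - v)` expanded in homogeneous terms
`X = X¹ + X² + X³ + …`, one has `X¹(v) = v`, `X²(v) = -(1/2)Γ(v,v)` and
`X³(v) = -(1/6)dΓ(v,v,v) + (1/6)Γ(v,Γ(v,v))`.

Formalization: the geodesic Taylor coefficients are `W₂(u) = -Γ(u,u)` and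
`W₃(u) = -dΓ(u,u,u) - 2Γ(u,Γ(u,u))`, and the inversion relation
`-X(v) + (1/2)W₂(X(v)) + (1/6)W₃(X(v)) = -v + O(|v|⁴)` determines `X¹, X², X³`
(assumed homogeneous of degrees `1, 2, 3`); the `O(|v|⁴)` remainder is encoded by the
condition that `t⁻³ · F(tv) → 0` as `t → 0⁺`, where `F` is the defect of the relation. -/
theorem stmt_15 {E : Type*} [NormedAddCommGroup E] [NormedSpace ℝ E]
    (Γ : E →ₗ[ℝ] E →ₗ[ℝ] E) (hΓsym : ∀ u v, Γ u v = Γ v u)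
    (dΓ : E →ₗ[ℝ] E →ₗ[ℝ] E →ₗ[ℝ] E)
    (X1 X2 X3 : E → E)
    (hX1hom : ∀ (t : ℝ) (v : E), X1 (t • v) = t • X1 v)
    (hX2hom : ∀ (t : ℝ) (v : E), X2 (t • v) = t ^ 2 • X2 v)
    (hX3hom : ∀ (t : ℝ) (v : E), X3 (t • v) = t ^ 3 • X3 v)
    (hrel : ∀ v : E, Tendsto
      (fun t : ℝ => (t ^ 3)⁻¹ •
        (-(X1 (t • v) + X2 (t • v) + X3 (t • v)) +
          (1 / 2 : ℝ) • (-(Γ (X1 (t • v) + X2 (t • v) + X3 (t • v))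
              (X1 (t • v) + X2 (t • v) + X3 (t • v)))) +
          (1 / 6 : ℝ) • (-(dΓ (X1 (t • v) + X2 (t • v) + X3 (t • v))
                (X1 (t • v) + X2 (t • v) + X3 (t • v))
                (X1 (t • v) + X2 (t • v) + X3 (t • v))) -
            (2 : ℝ) • (Γ (X1 (t • v) + X2 (t • v) + X3 (t • v))
              (Γ (X1 (t • v) + X2 (t • v) + X3 (t • v))
                (X1 (t • v) + X2 (t • v) + X3 (t • v))))) +
          t • v))
      (nhdsWithin 0 (Set.Ioi 0)) (nhds 0)) :
    ∀ v : E,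
      X1 v = v ∧
      X2 v = -((1 / 2 : ℝ) • Γ v v) ∧
      X3 v = -((1 / 6 : ℝ) • dΓ v v v) + (1 / 6 : ℝ) • Γ v (Γ v v) := by
  intro v
  have h := hrel v
  have hcongr : ∀ t : ℝ,
      (-(X1 (t • v) + X2 (t • v) + X3 (t • v)) +
          (1 / 2 : ℝ) • (-(Γ (X1 (t • v) + X2 (t • v) + X3 (t • v))
              (X1 (t • v) + X2 (t • v) + X3 (t • v)))) +
          (1 / 6 : ℝ) • (-(dΓ (X1 (t • v) + X2 (t • v) + X3 (t • v))
                (X1 (t • v) + X2 (t • v) + X3 (t • v))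
                (X1 (t • v) + X2 (t • v) + X3 (t • v))) -
            (2 : ℝ) • (Γ (X1 (t • v) + X2 (t • v) + X3 (t • v))
              (Γ (X1 (t • v) + X2 (t • v) + X3 (t • v))
                (X1 (t • v) + X2 (t • v) + X3 (t • v))))) +
          t • v) =
      t • ((1 : ℝ) • v + (-1 : ℝ) • (X1 v)) + t ^ 2 • ((-1 : ℝ) • (X2 v) + (-(1/2) : ℝ) • (Γ (X1 v) (X1 v))) + t ^ 3 • ((-1 : ℝ) • (X3 v) + (-(1/2) : ℝ) • (Γ (X1 v) (X2 v)) + (-(1/2) : ℝ) • (Γ (X2 v) (X1 v)) + (-(1/6) : ℝ) • (dΓ (X1 v) (X1 v) (X1 v)) + (-(1/3) : ℝ) • (Γ (X1 v) (Γ (X1 v) (X1 v)))) + t ^ 4 • ((-(1/2) : ℝ) • (Γ (X1 v) (X3 v)) + (-(1/2) : ℝ) • (Γ (X2 v) (X2 v)) + (-(1/2) : ℝ) • (Γ (X3 v) (X1 v)) + (-(1/6) : ℝ) • (dΓ (X1 v) (X1 v) (X2 v)) + (-(1/3) : ℝ) • (Γ (X1 v) (Γ (X1 v) (X2 v))) +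 (-(1/6) : ℝ) • (dΓ (X1 v) (X2 v) (X1 v)) + (-(1/3) : ℝ) • (Γ (X1 v) (Γ (X2 v) (X1 v))) + (-(1/6) : ℝ) • (dΓ (X2 v) (X1 v) (X1 v)) + (-(1/3) : ℝ) • (Γ (X2 v) (Γ (X1 v) (X1 v)))) + t ^ 5 • ((-(1/2) : ℝ) • (Γ (X2 v) (X3 v)) + (-(1/2) : ℝ) • (Γ (X3 v) (X2 v)) + (-(1/6) : ℝ) • (dΓ (X1 v) (X1 v) (X3 v)) + (-(1/3) : ℝ) • (Γ (X1 v) (Γ (X1 v) (X3 v))) + (-(1/6) : ℝ) • (dΓ (X1 v) (X2 v) (X2 v)) + (-(1/3) : ℝ) • (Γ (X1 v) (Γ (X2 v) (X2 v))) + (-(1/6) : ℝ) • (dΓ (X1 v) (X3 v) (X1 v)) + (-(1/3) : ℝ) • (Γ (X1 v) (Γ (X3 v) (X1 v))) + (-(1/6) : ℝ) • (dΓ (X2 v) (X1 v) (X2 v)) + (-(1/3) : ℝ) • (Γ (X2 v) (Γ (X1 v) (X2 v))) + (-(1/6) : ℝ) • (dΓ (X2 v) (X2 v) (X1 v)) +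 (-(1/3) : ℝ) • (Γ (X2 v) (Γ (X2 v) (X1 v))) + (-(1/6) : ℝ) • (dΓ (X3 v) (X1 v) (X1 v)) + (-(1/3) : ℝ) • (Γ (X3 v) (Γ (X1 v) (X1 v)))) + t ^ 6 • ((-(1/2) : ℝ) • (Γ (X3 v) (X3 v)) + (-(1/6) : ℝ) • (dΓ (X1 v) (X2 v) (X3 v)) + (-(1/3) : ℝ) • (Γ (X1 v) (Γ (X2 v) (X3 v))) + (-(1/6) : ℝ) • (dΓ (X1 v) (X3 v) (X2 v)) + (-(1/3) : ℝ) • (Γ (X1 v) (Γ (X3 v) (X2 v))) + (-(1/6) : ℝ) • (dΓ (X2 v) (X1 v) (X3 v)) + (-(1/3) : ℝ) • (Γ (X2 v) (Γ (X1 v) (X3 v))) + (-(1/6) : ℝ) • (dΓ (X2 v) (X2 v) (X2 v)) + (-(1/3) : ℝ) • (Γ (X2 v) (Γ (X2 v) (X2 v))) + (-(1/6) : ℝ) • (dΓ (X2 v) (X3 v) (X1 v)) + (-(1/3) : ℝ) • (Γ (X2 v) (Γ (X3 v) (X1 v))) + (-(1/6) : ℝ) • (dΓ (X3 v) (X1 v)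 (X2 v)) + (-(1/3) : ℝ) • (Γ (X3 v) (Γ (X1 v) (X2 v))) + (-(1/6) : ℝ) • (dΓ (X3 v) (X2 v) (X1 v)) + (-(1/3) : ℝ) • (Γ (X3 v) (Γ (X2 v) (X1 v)))) +
        t ^ 7 • ((-(1/6) : ℝ) • (dΓ (X1 v) (X3 v) (X3 v)) + (-(1/3) : ℝ) • (Γ (X1 v) (Γ (X3 v) (X3 v))) + (-(1/6) : ℝ) • (dΓ (X2 v) (X2 v) (X3 v)) + (-(1/3) : ℝ) • (Γ (X2 v) (Γ (X2 v) (X3 v))) + (-(1/6) : ℝ) • (dΓ (X2 v) (X3 v) (X2 v)) + (-(1/3) : ℝ) • (Γ (X2 v) (Γ (X3 v) (X2 v))) + (-(1/6) : ℝ) • (dΓ (X3 v) (X1 v) (X3 v)) + (-(1/3) : ℝ) • (Γ (X3 v) (Γ (X1 v) (X3 v))) + (-(1/6) : ℝ) • (dΓ (X3 v) (X2 v) (X2 v)) + (-(1/3) : ℝ) • (Γ (X3 v) (Γ (X2 v) (X2 v))) + (-(1/6) : ℝ) • (dΓ (X3 v) (X3 v) (X1 v)) + (-(1/3) : ℝ)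 • (Γ (X3 v) (Γ (X3 v) (X1 v)))) + t ^ 8 • ((-(1/6) : ℝ) • (dΓ (X2 v) (X3 v) (X3 v)) + (-(1/3) : ℝ) • (Γ (X2 v) (Γ (X3 v) (X3 v))) + (-(1/6) : ℝ) • (dΓ (X3 v) (X2 v) (X3 v)) + (-(1/3) : ℝ) • (Γ (X3 v) (Γ (X2 v) (X3 v))) + (-(1/6) : ℝ) • (dΓ (X3 v) (X3 v) (X2 v)) + (-(1/3) : ℝ) • (Γ (X3 v) (Γ (X3 v) (X2 v)))) + t ^ 9 • ((-(1/6) : ℝ) • (dΓ (X3 v) (X3 v) (X3 v)) + (-(1/3) : ℝ) • (Γ (X3 v) (Γ (X3 v) (X3 v)))) := by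
    intro t
    simp only [hX1hom, hX2hom, hX3hom, map_add, map_smul, map_neg, map_sub,
      LinearMap.add_apply, LinearMap.smul_apply, LinearMap.neg_apply, LinearMap.sub_apply]
    module
  have h' : Tendsto (fun t : ℝ => (t ^ 3)⁻¹ •
      (t • ((1 : ℝ) • v + (-1 : ℝ) • (X1 v)) + t ^ 2 • ((-1 : ℝ) • (X2 v) + (-(1/2) : ℝ) • (Γ (X1 v) (X1 v))) + t ^ 3 • ((-1 : ℝ) • (X3 v) + (-(1/2) : ℝ) • (Γ (X1 v) (X2 v)) + (-(1/2) : ℝ) • (Γ (X2 v) (X1 v)) + (-(1/6) : ℝ) • (dΓ (X1 v) (X1 v) (X1 v)) + (-(1/3) : ℝ) • (Γ (X1 v) (Γ (X1 v) (X1 v)))) + t ^ 4 • ((-(1/2) : ℝ) • (Γ (X1 v) (X3 v)) + (-(1/2) : ℝ) • (Γ (X2 v) (X2 v)) + (-(1/2) : ℝ) • (Γ (X3 v) (X1 v)) + (-(1/6) : ℝ) • (dΓ (X1 v) (X1 v) (X2 v)) + (-(1/3) : ℝ) • (Γ (X1 v) (Γ (X1 v) (X2 v))) + (-(1/6) : ℝ)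 • (dΓ (X1 v) (X2 v) (X1 v)) + (-(1/3) : ℝ) • (Γ (X1 v) (Γ (X2 v) (X1 v))) + (-(1/6) : ℝ) • (dΓ (X2 v) (X1 v) (X1 v)) + (-(1/3) : ℝ) • (Γ (X2 v) (Γ (X1 v) (X1 v)))) + t ^ 5 • ((-(1/2) : ℝ) • (Γ (X2 v) (X3 v)) + (-(1/2) : ℝ) • (Γ (X3 v) (X2 v)) + (-(1/6) : ℝ) • (dΓ (X1 v) (X1 v) (X3 v)) + (-(1/3) : ℝ) • (Γ (X1 v) (Γ (X1 v) (X3 v))) + (-(1/6) : ℝ) • (dΓ (X1 v) (X2 v) (X2 v)) + (-(1/3) : ℝ) • (Γ (X1 v) (Γ (X2 v) (X2 v))) + (-(1/6) : ℝ) • (dΓ (X1 v) (X3 v) (X1 v)) + (-(1/3) : ℝ) • (Γ (X1 v) (Γ (X3 v) (X1 v))) + (-(1/6) : ℝ) • (dΓ (X2 v) (X1 v) (X2 v)) + (-(1/3) : ℝ) • (Γ (X2 v) (Γ (X1 v) (X2 v))) + (-(1/6) : ℝ) • (dΓ (X2 v) (X2 v) (X1 v)) + (-(1/3) : ℝ)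 • (Γ (X2 v) (Γ (X2 v) (X1 v))) + (-(1/6) : ℝ) • (dΓ (X3 v) (X1 v) (X1 v)) + (-(1/3) : ℝ) • (Γ (X3 v) (Γ (X1 v) (X1 v)))) + t ^ 6 • ((-(1/2) : ℝ) • (Γ (X3 v) (X3 v)) + (-(1/6) : ℝ) • (dΓ (X1 v) (X2 v) (X3 v)) + (-(1/3) : ℝ) • (Γ (X1 v) (Γ (X2 v) (X3 v))) + (-(1/6) : ℝ) • (dΓ (X1 v) (X3 v) (X2 v)) + (-(1/3) : ℝ) • (Γ (X1 v) (Γ (X3 v) (X2 v))) + (-(1/6) : ℝ) • (dΓ (X2 v) (X1 v) (X3 v)) + (-(1/3) : ℝ) • (Γ (X2 v) (Γ (X1 v) (X3 v))) + (-(1/6) : ℝ) • (dΓ (X2 v) (X2 v) (X2 v)) + (-(1/3) : ℝ) • (Γ (X2 v) (Γ (X2 v) (X2 v))) + (-(1/6) : ℝ) • (dΓ (X2 v) (X3 v) (X1 v)) + (-(1/3) : ℝ) • (Γ (X2 v) (Γ (X3 v) (X1 v))) + (-(1/6) : ℝ) • (dΓ (X3 v) (X1 v) (X2 v)) + (-(1/3)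 : ℝ) • (Γ (X3 v) (Γ (X1 v) (X2 v))) + (-(1/6) : ℝ) • (dΓ (X3 v) (X2 v) (X1 v)) + (-(1/3) : ℝ) • (Γ (X3 v) (Γ (X2 v) (X1 v)))) +
        t ^ 7 • ((-(1/6) : ℝ) • (dΓ (X1 v) (X3 v) (X3 v)) + (-(1/3) : ℝ) • (Γ (X1 v) (Γ (X3 v) (X3 v))) + (-(1/6) : ℝ) • (dΓ (X2 v) (X2 v) (X3 v)) + (-(1/3) : ℝ) • (Γ (X2 v) (Γ (X2 v) (X3 v))) + (-(1/6) : ℝ) • (dΓ (X2 v) (X3 v) (X2 v)) + (-(1/3) : ℝ) • (Γ (X2 v) (Γ (X3 v) (X2 v))) + (-(1/6) : ℝ) • (dΓ (X3 v) (X1 v) (X3 v)) + (-(1/3) : ℝ) • (Γ (X3 v) (Γ (X1 v) (X3 v))) + (-(1/6) : ℝ) • (dΓ (X3 v) (X2 v) (X2 v)) + (-(1/3) : ℝ) • (Γ (X3 v) (Γ (X2 v) (X2 v))) + (-(1/6) : ℝ) • (dΓ (X3 v) (X3 v) (X1 v)) + (-(1/3) : ℝ) • (Γ (X3 v) (Γ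 (X3 v) (X1 v)))) + t ^ 8 • ((-(1/6) : ℝ) • (dΓ (X2 v) (X3 v) (X3 v)) + (-(1/3) : ℝ) • (Γ (X2 v) (Γ (X3 v) (X3 v))) + (-(1/6) : ℝ) • (dΓ (X3 v) (X2 v) (X3 v)) + (-(1/3) : ℝ) • (Γ (X3 v) (Γ (X2 v) (X3 v))) + (-(1/6) : ℝ) • (dΓ (X3 v) (X3 v) (X2 v)) + (-(1/3) : ℝ) • (Γ (X3 v) (Γ (X3 v) (X2 v)))) + t ^ 9 • ((-(1/6) : ℝ) • (dΓ (X3 v) (X3 v) (X3 v)) + (-(1/3) : ℝ) • (Γ (X3 v) (Γ (X3 v) (X3 v))))))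
      (nhdsWithin 0 (Set.Ioi 0)) (nhds 0) := by
    refine h.congr fun t => ?_
    rw [hcongr t]
  obtain ⟨e1, e2, e3⟩ := extract3 _ _ _ _ _ _ _ _ _ h'
  have h1 : X1 v = v := by
    have := e1; linear_combination (norm := module) -this
  have h2 : X2 v = -((1 / 2 : ℝ) • Γ v v) := by
    rw [h1] at e2
    linear_combination (norm := module) -e2
  have h3 : X3 v = -((1 / 6 : ℝ) • dΓ v v v) + (1 / 6 : ℝ) • Γ v (Γ v v) := by
    rw [h1, h2] at e3
    simp only [map_neg, map_smul, LinearMap.neg_apply, LinearMap.smul_apply, smul_neg,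
      neg_neg] at e3
    rw [hΓsym (Γ v v) v] at e3
    linear_combination (norm := module) -e3
  exact ⟨h1, h2, h3⟩
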